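/- arXiv:1903.01761 — 9 statements merged into one kernel-verified Lean document; each statement's English description precedes it below -/
import Mathlib

section
/- Let X be a Banach space with the Daugavet property, i.e., for every ε > 0, every x in the unit sphere S_X, and every slice S of the closed unit ball B_X there exists y in S with ‖x + y‖ > 2 − ε. Then for every rank-one bounded linear operator T : X → X, the identity operator I satisfies ‖I + T‖ = 1 + ‖T‖. -/
private lemma key_ineq {X : Type*} [NormedAddCommGroup X] [NormedSpace ℝ X]
    (x y : X) (c ε : ℝ) (hx : ‖x‖ ≤ 1) (hy : ‖y‖ ≤ 1) (hxy : 2 - ε ≤ ‖x + y‖) :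
    1 + c - (max 1 c) * ε ≤ ‖c • x + y‖ := by
  set m := max 1 c with hm
  have hm1 : 1 ≤ m := le_max_left _ _
  have hmc : c ≤ m := le_max_right _ _
  have heq : c • x + y = m • (x + y) - (m - c) • x - (m - 1) • y := by module
  have h1 : ‖m • (x + y)‖ - ‖(m - c) • x‖ - ‖(m - 1) • y‖ ≤ ‖c • x + y‖ := by
    rw [heq]
    calc ‖m • (x + y)‖ - ‖(m - c) • x‖ - ‖(m - 1) • y‖
        ≤ ‖m • (x + y) - (m - c) • x‖ - ‖(m - 1) • y‖ := by
          have := norm_sub_norm_le (m • (x + y)) ((m - c) • x)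
          linarith
      _ ≤ ‖m • (x + y) - (m - c) • x - (m - 1) • y‖ :=
          norm_sub_norm_le _ _
  have e1 : ‖m • (x + y)‖ = m * ‖x + y‖ := by
    rw [norm_smul, Real.norm_eq_abs, abs_of_pos (by linarith)]
  have e2 : ‖(m - c) • x‖ ≤ (m - c) * 1 := by
    rw [norm_smul, Real.norm_eq_abs, abs_of_nonneg (by linarith)]
    exact mul_le_mul_of_nonneg_left hx (by linarith)
  have e3 : ‖(m - 1) • y‖ ≤ (m - 1) * 1 := by
    rw [norm_smul, Real.norm_eq_abs, abs_of_nonneg (by linarith)]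
    exact mul_le_mul_of_nonneg_left hy (by linarith)
  have e4 : m * (2 - ε) ≤ m * ‖x + y‖ :=
    mul_le_mul_of_nonneg_left hxy (by linarith)
  nlinarith

/-- If `X` is a (nontrivial) Banach space with the Daugavet property,
then every rank-one operator `T x = f x • y₀` satisfies `‖I + T‖ = 1 + ‖T‖`. -/
theorem stmt0 {X : Type*} [NormedAddCommGroup X] [NormedSpace ℝ X] [CompleteSpace X]
    [Nontrivial X]
    (hDP : ∀ ε > (0:ℝ), ∀ x : X, ‖x‖ = 1 → ∀ f : X →L[ℝ] ℝ, f ≠ 0 → ∀ α > (0:ℝ),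
      ∃ y : X, ‖y‖ ≤ 1 ∧ f y > ‖f‖ - α ∧ ‖x + y‖ > 2 - ε)
    (f : X →L[ℝ] ℝ) (y₀ : X) :
    ‖ContinuousLinearMap.id ℝ X + f.smulRight y₀‖ = 1 + ‖f.smulRight y₀‖ := by
  set T := f.smulRight y₀ with hT
  by_cases hf : f = 0
  · have hT0 : T = 0 := by ext z; simp [hT, hf]
    simp [hT0, ContinuousLinearMap.norm_id]
  by_cases hy₀ : y₀ = 0
  · have hT0 : T = 0 := by ext z; simp [hT, hy₀]
    simp [hT0, ContinuousLinearMap.norm_id]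
  have hTnorm : ‖T‖ = ‖f‖ * ‖y₀‖ := f.norm_smulRight_apply y₀
  have hy₀pos : (0:ℝ) < ‖y₀‖ := norm_pos_iff.mpr hy₀
  apply le_antisymm
  · calc ‖ContinuousLinearMap.id ℝ X + T‖ ≤ ‖ContinuousLinearMap.id ℝ X‖ + ‖T‖ :=
        norm_add_le _ _
      _ = 1 + ‖T‖ := by rw [ContinuousLinearMap.norm_id]
  · apply le_of_forall_pos_le_add
    intro ε' hε'
    set x : X := ‖y₀‖⁻¹ • y₀ with hx
    have hxnorm : ‖x‖ = 1 := norm_smul_inv_norm hy₀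
    have hTpos : (0:ℝ) ≤ ‖T‖ := norm_nonneg _
    set ε : ℝ := ε' / (2 * (1 + ‖T‖)) with hεdef
    have hεpos : 0 < ε := div_pos hε' (by linarith)
    set α : ℝ := ε' / (2 * ‖y₀‖) with hαdef
    have hαpos : 0 < α := div_pos hε' (by linarith)
    obtain ⟨y, hy1, hy2, hy3⟩ := hDP ε hεpos x hxnorm f hf α hαpos
    set c : ℝ := f y * ‖y₀‖ with hc
    have hTy : (ContinuousLinearMap.id ℝ X + T) y = c • x + y := by
      simp only [ContinuousLinearMap.add_apply, ContinuousLinearMap.id_apply,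
        hT, ContinuousLinearMap.smulRight_apply, hc, hx, smul_smul]
      rw [mul_assoc, mul_inv_cancel₀ (ne_of_gt hy₀pos), mul_one]
      abel
    have hcle : c ≤ ‖f‖ * ‖y₀‖ := by
      have : f y ≤ ‖f‖ := by
        calc f y ≤ ‖f y‖ := le_abs_self _
          _ ≤ ‖f‖ * ‖y‖ := f.le_opNorm y
          _ ≤ ‖f‖ * 1 := by
              exact mul_le_mul_of_nonneg_left hy1 (norm_nonneg _)
          _ = ‖f‖ := mul_one _
      exact mul_le_mul_of_nonneg_right this hy₀pos.le
    have hkey : 1 + c - (max 1 c) * ε ≤ ‖c • x + y‖ :=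
      key_ineq x y c ε hxnorm.le hy1 hy3.le
    have hmle : max 1 c * ε ≤ (1 + ‖T‖) * ε := by
      apply mul_le_mul_of_nonneg_right _ hεpos.le
      exact max_le (by linarith) (by rw [hTnorm]; linarith)
    have hcge : ‖T‖ - α * ‖y₀‖ ≤ c := by
      rw [hTnorm, hc]
      nlinarith [hy2]
    have hbound : ‖(ContinuousLinearMap.id ℝ X + T) y‖ ≤ ‖ContinuousLinearMap.id ℝ X + T‖ := by
      calc ‖(ContinuousLinearMap.id ℝ X + T) y‖
          ≤ ‖ContinuousLinearMap.id ℝ X + T‖ * ‖y‖ := (ContinuousLinearMap.id ℝ X + T).le_opNorm y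
        _ ≤ ‖ContinuousLinearMap.id ℝ X + T‖ * 1 :=
            mul_le_mul_of_nonneg_left hy1 (norm_nonneg _)
        _ = _ := mul_one _
    have hεeq : (1 + ‖T‖) * ε = ε' / 2 := by
      rw [hεdef]; field_simp
    have hαeq : α * ‖y₀‖ = ε' / 2 := by
      rw [hαdef]; field_simp
    rw [hTy] at hbound
    linarith
end

section
/- Let X and Y be Banach spaces, both with the operator Daugavet property. Then the ℓ∞-sum X ⊕∞ Y (the product space with norm ‖(x,y)‖ = max{‖x‖, ‖y‖}) has the operator Daugavet property. -/
/-- The operator Daugavet property. -/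
def ODP (X : Type*) [NormedAddCommGroup X] [NormedSpace ℝ X] : Prop :=
  ∀ (n : ℕ) (x : Fin n → X), (∀ i, ‖x i‖ = 1) →
    ∀ f : X →L[ℝ] ℝ, f ≠ 0 → ∀ α > (0:ℝ), ∀ ε > (0:ℝ),
      ∃ z : X, ‖z‖ ≤ 1 ∧ f z > ‖f‖ - α ∧
        ∀ x' : X, ‖x'‖ ≤ 1 →
          ∃ T : X →L[ℝ] X, ‖T‖ ≤ 1 + ε ∧ T z = x' ∧ ∀ i, ‖T (x i) - x i‖ < ε

/-! Write the ℓ∞-sum as a product: a slice of `B_{X × Y}` given by `f` contains the product of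
the slices of `B_X` and `B_Y` given by the restrictions `f ∘ inl`, `f ∘ inr` (with half the
depth), since `‖f‖ ≤ ‖f ∘ inl‖ + ‖f ∘ inr‖`. Picking good points `z₁`, `z₂` in these slices with
respect to the coordinates of the given points, the diagonal operator `T₁ × T₂` witnesses the
property for `(z₁, z₂)`, because its norm is at most `max ‖T₁‖ ‖T₂‖` and `‖(u, v)‖ = max ‖u‖ ‖v‖`.
The restricted functionals may vanish and the coordinates of points of the unit sphere of
`X × Y` need only lie in the unit balls, so the property is first extended to that setting. -/

namespace ContinuousLinearMap

variable {𝕜 E F G H : Type*} [NontriviallyNormedField 𝕜]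
  [SeminormedAddCommGroup E] [NormedSpace 𝕜 E] [SeminormedAddCommGroup F] [NormedSpace 𝕜 F]
  [SeminormedAddCommGroup G] [NormedSpace 𝕜 G] [SeminormedAddCommGroup H] [NormedSpace 𝕜 H]

theorem opNorm_le_opNorm_comp_inl_add_opNorm_comp_inr (f : E × F →L[𝕜] G) :
    ‖f‖ ≤ ‖f.comp (inl 𝕜 E F)‖ + ‖f.comp (inr 𝕜 E F)‖ := by
  refine f.opNorm_le_bound (by positivity) fun v => ?_
  calc ‖f v‖ = ‖f.comp (inl 𝕜 E F) v.1 + f.comp (inr 𝕜 E F) v.2‖ := by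
        rw [comp_inl_add_comp_inr]
    _ ≤ ‖f.comp (inl 𝕜 E F)‖ * ‖v.1‖ + ‖f.comp (inr 𝕜 E F)‖ * ‖v.2‖ :=
        (norm_add_le _ _).trans (add_le_add (le_opNorm _ _) (le_opNorm _ _))
    _ ≤ ‖f.comp (inl 𝕜 E F)‖ * ‖v‖ + ‖f.comp (inr 𝕜 E F)‖ * ‖v‖ := by
        gcongr
        exacts [_root_.norm_fst_le v, _root_.norm_snd_le v]
    _ = (‖f.comp (inl 𝕜 E F)‖ + ‖f.comp (inr 𝕜 E F)‖) * ‖v‖ := by ring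

theorem opNorm_prodMap_le (f : E →L[𝕜] G) (g : F →L[𝕜] H) :
    ‖f.prodMap g‖ ≤ max ‖f‖ ‖g‖ := by
  refine opNorm_le_bound _ (by positivity) fun v => ?_
  calc ‖f.prodMap g v‖ = max ‖f v.1‖ ‖g v.2‖ := Prod.norm_def _
    _ ≤ max (‖f‖ * ‖v‖) (‖g‖ * ‖v‖) := by
        gcongr
        exacts [f.le_opNorm_of_le (_root_.norm_fst_le v), g.le_opNorm_of_le (_root_.norm_snd_le v)]
    _ = max ‖f‖ ‖g‖ * ‖v‖ := (max_mul_of_nonneg _ _ (norm_nonneg v)).symm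

end ContinuousLinearMap

section

variable {X Y : Type*} [NormedAddCommGroup X] [NormedSpace ℝ X]
  [NormedAddCommGroup Y] [NormedSpace ℝ Y]

def IsOperatorDaugavetPoint {n : ℕ} (x : Fin n → X) (ε : ℝ) (z : X) : Prop :=
  ∀ x' : X, ‖x'‖ ≤ 1 →
    ∃ T : X →L[ℝ] X, ‖T‖ ≤ 1 + ε ∧ T z = x' ∧ ∀ i, ‖T (x i) - x i‖ < ε

theorem isOperatorDaugavetPoint_of_subsingleton [Subsingleton X] {n : ℕ} (x : Fin n → X)
    {ε : ℝ} (hε : 0 < ε) (z : X) : IsOperatorDaugavetPoint x ε z :=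
  fun x' _ => ⟨0, by rw [norm_zero]; linarith, Subsingleton.elim _ _, fun i => by
    simpa [Subsingleton.elim (x i) 0] using hε⟩

theorem IsOperatorDaugavetPoint.of_eq_smul {n : ℕ} {x y : Fin n → X} {ε : ℝ} {z : X}
    (hz : IsOperatorDaugavetPoint y ε z) (c : Fin n → ℝ) (hc : ∀ i, |c i| ≤ 1)
    (hxy : ∀ i, x i = c i • y i) : IsOperatorDaugavetPoint x ε z := by
  intro x' hx'
  obtain ⟨T, hT, hTz, hTy⟩ := hz x' hx'
  refine ⟨T, hT, hTz, fun i => ?_⟩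
  calc ‖T (x i) - x i‖ = |c i| * ‖T (y i) - y i‖ := by
        rw [hxy, map_smul, ← smul_sub, norm_smul, Real.norm_eq_abs]
    _ ≤ ‖T (y i) - y i‖ := mul_le_of_le_one_left (norm_nonneg _) (hc i)
    _ < ε := hTy i

theorem IsOperatorDaugavetPoint.prod {n : ℕ} {x : Fin n → X} {y : Fin n → Y} {ε : ℝ}
    {z₁ : X} {z₂ : Y} (h₁ : IsOperatorDaugavetPoint x ε z₁)
    (h₂ : IsOperatorDaugavetPoint y ε z₂) :
    IsOperatorDaugavetPoint (fun i => (x i, y i)) ε (z₁, z₂) := by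
  rintro ⟨x', y'⟩ hxy
  obtain ⟨T₁, hT₁, hT₁z, hT₁x⟩ := h₁ x' ((norm_fst_le _).trans hxy)
  obtain ⟨T₂, hT₂, hT₂z, hT₂y⟩ := h₂ y' ((norm_snd_le _).trans hxy)
  refine ⟨T₁.prodMap T₂, (T₁.opNorm_prodMap_le T₂).trans (max_le hT₁ hT₂), ?_, fun i => ?_⟩
  · simp [hT₁z, hT₂z]
  · simpa [Prod.norm_def] using And.intro (hT₁x i) (hT₂y i)

theorem exists_norm_eq_one_and_eq_norm_smul [Nontrivial X] (v : X) :
    ∃ u : X, ‖u‖ = 1 ∧ v = ‖v‖ • u := by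
  by_cases hv : v = 0
  · obtain ⟨u, hu⟩ := exists_norm_eq X zero_le_one
    exact ⟨u, hu, by simp [hv]⟩
  · refine ⟨‖v‖⁻¹ • v, ?_, ?_⟩
    · rw [norm_smul, norm_inv, norm_norm, inv_mul_cancel₀ (norm_ne_zero_iff.mpr hv)]
    · rw [smul_smul, mul_inv_cancel₀ (norm_ne_zero_iff.mpr hv), one_smul]

theorem ODP.exists_isOperatorDaugavetPoint (hX : ODP X) {n : ℕ} (x : Fin n → X)
    (hx : ∀ i, ‖x i‖ ≤ 1) (f : X →L[ℝ] ℝ) {α ε : ℝ} (hα : 0 < α) (hε : 0 < ε) :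
    ∃ z : X, ‖z‖ ≤ 1 ∧ ‖f‖ - α < f z ∧ IsOperatorDaugavetPoint x ε z := by
  rcases subsingleton_or_nontrivial X with hX₀ | hX₀
  · refine ⟨0, by simp, ?_, isOperatorDaugavetPoint_of_subsingleton x hε 0⟩
    simpa [Subsingleton.elim f 0] using hα
  choose u hu hxu using fun i => exists_norm_eq_one_and_eq_norm_smul (x i)
  have hc : ∀ i, |‖x i‖| ≤ 1 := fun i => (abs_norm _).trans_le (hx i)
  by_cases hf : f = 0
  · -- the slice condition is void, so any nonzero functional can stand in for `f`
    obtain ⟨g, hg⟩ := exists_ne (0 : X →L[ℝ] ℝ)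
    obtain ⟨z, hz, -, hzu⟩ := hX n u hu g hg 1 one_pos ε hε
    exact ⟨z, hz, by simpa [hf] using hα, IsOperatorDaugavetPoint.of_eq_smul hzu _ hc hxu⟩
  · obtain ⟨z, hz, hfz, hzu⟩ := hX n u hu f hf α hα ε hε
    exact ⟨z, hz, hfz, IsOperatorDaugavetPoint.of_eq_smul hzu _ hc hxu⟩

end

theorem stmt2_general {X Y : Type*} [NormedAddCommGroup X] [NormedSpace ℝ X]
    [NormedAddCommGroup Y] [NormedSpace ℝ Y]
    (hX : ODP X) (hY : ODP Y) : ODP (X × Y) := by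
  intro n p hp f _ α hα ε hε
  obtain ⟨z₁, hz₁, hfz₁, hz₁p⟩ := hX.exists_isOperatorDaugavetPoint (fun i => (p i).1)
    (fun i => (norm_fst_le _).trans_eq (hp i)) (f.comp (.inl ℝ X Y)) (half_pos hα) hε
  obtain ⟨z₂, hz₂, hfz₂, hz₂p⟩ := hY.exists_isOperatorDaugavetPoint (fun i => (p i).2)
    (fun i => (norm_snd_le _).trans_eq (hp i)) (f.comp (.inr ℝ X Y)) (half_pos hα) hε
  refine ⟨(z₁, z₂), max_le hz₁ hz₂, ?_, hz₁p.prod hz₂p⟩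
  have hf := f.opNorm_le_opNorm_comp_inl_add_opNorm_comp_inr
  calc ‖f‖ - α ≤ ‖f.comp (.inl ℝ X Y)‖ - α / 2 + (‖f.comp (.inr ℝ X Y)‖ - α / 2) := by linarith
    _ < f.comp (.inl ℝ X Y) z₁ + f.comp (.inr ℝ X Y) z₂ := add_lt_add hfz₁ hfz₂
    _ = f (z₁, z₂) := f.comp_inl_add_comp_inr (z₁, z₂)

/-- the ℓ∞-sum (product with the max norm) of two spaces with the ODP
has the ODP. (In Mathlib the norm on `X × Y` is precisely `max ‖x‖ ‖y‖`.) -/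
theorem stmt2 {X Y : Type*} [NormedAddCommGroup X] [NormedSpace ℝ X] [CompleteSpace X]
    [NormedAddCommGroup Y] [NormedSpace ℝ Y] [CompleteSpace Y]
    (hX : ODP X) (hY : ODP Y) : ODP (X × Y) :=
  stmt2_general hX hY
end

section
/- Let X be a Banach space. The norm of X is 2-rough (i.e., limsup_{‖h‖→0} (‖x+h‖ + ‖x−h‖ − 2‖x‖)/‖h‖ ≥ 2 for every x ∈ X) if and only if X is locally octahedral, meaning that for every x ∈ S_X and every ε > 0 there exists y ∈ S_X with ‖x + y‖ > 2 − ε and ‖x − y‖ > 2 − ε. -/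
/-!
For a unit vector `x` and `h ≠ 0` with `‖h‖ ≤ 1`, writing `x + h` as the convex combination
`‖h‖ • (x + y) + (1 - ‖h‖) • x` with `y = ‖h‖⁻¹ • h` bounds the roughness quotient at `h` by
`‖x + y‖`, and by symmetry by `‖x - y‖`; so quotients close to `2` yield the octahedral vectors `y`.
Conversely, at `x = s • u` with `‖u‖ = 1`, an octahedral vector `y` for `u` with defect `ε` makes
the quotient at `t • y` at least `2 - 2 (s / t) ε`; taking `ε` of order `t / s` keeps it
close to `2` while `t → 0`.
-/

open Filter Topology

noncomputable def roughQuot {X : Type*} [SeminormedAddCommGroup X] (x h : X) : ℝ :=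
  (‖x + h‖ + ‖x - h‖ - 2 * ‖x‖) / ‖h‖

section Seminormed

variable {X : Type*} [SeminormedAddCommGroup X]

theorem roughQuot_neg (x h : X) : roughQuot x (-h) = roughQuot x h := by
  simp only [roughQuot, sub_neg_eq_add, ← sub_eq_add_neg, norm_neg, add_comm ‖x - h‖]

theorem abs_roughQuot_le_two (x h : X) : |roughQuot x h| ≤ 2 := by
  have h₁ := abs_norm_sub_norm_le (x + h) x
  have h₂ := abs_norm_sub_norm_le (x - h) x
  simp only [add_sub_cancel_left, sub_sub_cancel_left, norm_neg] at h₁ h₂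
  rw [roughQuot, abs_div, abs_norm]
  refine div_le_of_le_mul₀ (norm_nonneg h) zero_le_two ?_
  calc |‖x + h‖ + ‖x - h‖ - 2 * ‖x‖| = |(‖x + h‖ - ‖x‖) + (‖x - h‖ - ‖x‖)| := by ring_nf
    _ ≤ |‖x + h‖ - ‖x‖| + |‖x - h‖ - ‖x‖| := abs_add_le _ _
    _ ≤ 2 * ‖h‖ := by linarith

variable [NormedSpace ℝ X]

theorem mul_norm_add_sub_le_norm_smul_add_smul (u : X) {y : X} (hy : ‖y‖ = 1) {s t : ℝ}
    (ht : 0 ≤ t) (hts : t ≤ s) : s * ‖u + y‖ - (s - t) ≤ ‖s • u + t • y‖ := by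
  have hsplit : s • u + t • y = s • (u + y) - (s - t) • y := by
    rw [smul_add, sub_smul]
    abel
  calc s * ‖u + y‖ - (s - t) = ‖s • (u + y)‖ - ‖(s - t) • y‖ := by
        rw [norm_smul, norm_smul, hy, Real.norm_of_nonneg (ht.trans hts),
          Real.norm_of_nonneg (sub_nonneg.mpr hts), mul_one]
    _ ≤ ‖s • u + t • y‖ := hsplit ▸ norm_sub_norm_le _ _

theorem two_sub_le_roughQuot_smul_smul {u y : X} (hy : ‖y‖ = 1) (hu : ‖u‖ = 1) {s t : ℝ}
    (ht : 0 < t) (hts : t ≤ s) :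
    2 - s / t * (4 - ‖u + y‖ - ‖u - y‖) ≤ roughQuot (s • u) (t • y) := by
  have hplus := mul_norm_add_sub_le_norm_smul_add_smul u hy ht.le hts
  have hminus := mul_norm_add_sub_le_norm_smul_add_smul u (y := -y) (by rwa [norm_neg]) ht.le hts
  rw [smul_neg, ← sub_eq_add_neg, ← sub_eq_add_neg] at hminus
  have hnorm_ty : ‖t • y‖ = t := by rw [norm_smul, hy, Real.norm_of_nonneg ht.le, mul_one]
  have hnorm_su : ‖s • u‖ = s := by
    rw [norm_smul, hu, Real.norm_of_nonneg (ht.le.trans hts), mul_one]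
  have hcancel : s / t * (4 - ‖u + y‖ - ‖u - y‖) * t = s * (4 - ‖u + y‖ - ‖u - y‖) := by
    field_simp
  rw [roughQuot, hnorm_ty, hnorm_su, le_div_iff₀ ht, sub_mul, hcancel]
  linarith

end Seminormed

section Normed

variable {X : Type*} [NormedAddCommGroup X]

theorem roughQuot_zero_left {h : X} (hh : h ≠ 0) : roughQuot 0 h = 2 := by
  have : ‖h‖ ≠ 0 := norm_ne_zero_iff.mpr hh
  simp only [roughQuot, zero_add, zero_sub, norm_neg, norm_zero, mul_zero, sub_zero]
  field_simp
  ring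

variable [NormedSpace ℝ X]

theorem roughQuot_le_norm_add_inv_norm_smul {x h : X} (hx : ‖x‖ = 1) (hh : h ≠ 0)
    (hh₁ : ‖h‖ ≤ 1) : roughQuot x h ≤ ‖x + ‖h‖⁻¹ • h‖ := by
  set t := ‖h‖
  set y := t⁻¹ • h
  have ht : 0 < t := norm_pos_iff.mpr hh
  have hconv : x + h = t • (x + y) + (1 - t) • x := by
    simp only [y, smul_add, smul_inv_smul₀ ht.ne', sub_smul, one_smul]
    abel
  have hplus : ‖x + h‖ ≤ t * ‖x + y‖ + (1 - t) := by
    calc ‖x + h‖ ≤ ‖t • (x + y)‖ + ‖(1 - t) • x‖ := hconv ▸ norm_add_le _ _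
      _ = t * ‖x + y‖ + (1 - t) := by
        rw [norm_smul, norm_smul, hx, Real.norm_of_nonneg ht.le,
          Real.norm_of_nonneg (sub_nonneg.mpr hh₁), mul_one]
  have hminus : ‖x - h‖ ≤ 1 + t := hx ▸ norm_sub_le x h
  rw [roughQuot, div_le_iff₀ ht, hx]
  linarith

theorem roughQuot_le_norm_sub_inv_norm_smul {x h : X} (hx : ‖x‖ = 1) (hh : h ≠ 0)
    (hh₁ : ‖h‖ ≤ 1) : roughQuot x h ≤ ‖x - ‖h‖⁻¹ • h‖ := by
  have := roughQuot_le_norm_add_inv_norm_smul hx (neg_ne_zero.mpr hh) (by rwa [norm_neg])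
  rwa [roughQuot_neg, norm_neg, smul_neg, ← sub_eq_add_neg] at this

variable [Nontrivial X]

theorem two_le_limsup_roughQuot_iff (x : X) :
    2 ≤ limsup (roughQuot x) (𝓝[≠] 0) ↔ ∀ c < 2, ∃ᶠ h in 𝓝[≠] 0, c < roughQuot x h := by
  have hbound (h : X) := abs_le.mp (abs_roughQuot_le_two x h)
  exact le_limsup_iff (isBoundedUnder_of ⟨-2, fun h => (hbound h).1⟩).isCoboundedUnder_le
    (isBoundedUnder_of ⟨2, fun h => (hbound h).2⟩)

theorem exists_norm_add_gt_and_norm_sub_gt_of_two_le_limsup {x : X} (hx : ‖x‖ = 1)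
    (hrough : 2 ≤ limsup (roughQuot x) (𝓝[≠] 0)) {ε : ℝ} (hε : 0 < ε) :
    ∃ y : X, ‖y‖ = 1 ∧ ‖x + y‖ > 2 - ε ∧ ‖x - y‖ > 2 - ε := by
  have hsmall : ∀ᶠ h in 𝓝[≠] (0 : X), h ≠ 0 ∧ ‖h‖ ≤ 1 := by
    refine eventually_mem_nhdsWithin.and (nhdsWithin_le_nhds ?_)
    filter_upwards [Metric.closedBall_mem_nhds (0 : X) one_pos] with h hh
    simpa using hh
  obtain ⟨h, hlarge, hh, hh₁⟩ :=
    (((two_le_limsup_roughQuot_iff x).mp hrough (2 - ε) (by linarith)).and_eventually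
      hsmall).exists
  exact ⟨‖h‖⁻¹ • h, norm_smul_inv_norm hh,
    hlarge.trans_le (roughQuot_le_norm_add_inv_norm_smul hx hh hh₁),
    hlarge.trans_le (roughQuot_le_norm_sub_inv_norm_smul hx hh hh₁)⟩

theorem two_le_limsup_roughQuot_of_octahedral
    (hoct : ∀ u : X, ‖u‖ = 1 → ∀ ε > (0 : ℝ), ∃ y : X, ‖y‖ = 1 ∧
      ‖u + y‖ > 2 - ε ∧ ‖u - y‖ > 2 - ε) (x : X) :
    2 ≤ limsup (roughQuot x) (𝓝[≠] 0) := by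
  refine (two_le_limsup_roughQuot_iff x).mpr fun c hc => ?_
  rcases eq_or_ne x 0 with rfl | hx
  · refine Eventually.frequently ?_
    filter_upwards [self_mem_nhdsWithin] with h hh
    rwa [roughQuot_zero_left hh]
  rw [(nhdsWithin_hasBasis Metric.nhds_basis_ball _).frequently_iff]
  intro r hr
  set s := ‖x‖
  have hs : 0 < s := norm_pos_iff.mpr hx
  set t := min (r / 2) s
  have ht : 0 < t := lt_min (half_pos hr) hs
  have hu : ‖s⁻¹ • x‖ = 1 := norm_smul_inv_norm hx
  obtain ⟨y, hy, hplus, hminus⟩ := hoct (s⁻¹ • x) hu ((2 - c) * t / (2 * s)) (by positivity)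
  have hnorm_ty : ‖t • y‖ = t := by rw [norm_smul, hy, Real.norm_of_nonneg ht.le, mul_one]
  refine ⟨t • y, ⟨?_, ?_⟩, ?_⟩
  · rw [Metric.mem_ball, dist_zero_right, hnorm_ty]
    exact (min_le_left _ _).trans_lt (half_lt_self hr)
  · rw [Set.mem_compl_singleton_iff, ← norm_ne_zero_iff, hnorm_ty]
    exact ht.ne'
  · have hquot := two_sub_le_roughQuot_smul_smul hy hu ht (min_le_right _ _)
    rw [smul_inv_smul₀ hs.ne'] at hquot
    have hdefect : s / t * (4 - ‖s⁻¹ • x + y‖ - ‖s⁻¹ • x - y‖) < 2 - c := by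
      calc s / t * (4 - ‖s⁻¹ • x + y‖ - ‖s⁻¹ • x - y‖)
          < s / t * (2 * ((2 - c) * t / (2 * s))) := by gcongr; linarith
        _ = 2 - c := by field_simp
    linarith

end Normed

theorem stmt3_general {X : Type*} [NormedAddCommGroup X] [NormedSpace ℝ X]
    [Nontrivial X] :
    (∀ x : X, 2 ≤ limsup (fun h : X => (‖x + h‖ + ‖x - h‖ - 2 * ‖x‖) / ‖h‖)
      (nhdsWithin (0 : X) {(0 : X)}ᶜ)) ↔
    (∀ x : X, ‖x‖ = 1 → ∀ ε > (0:ℝ), ∃ y : X, ‖y‖ = 1 ∧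
      ‖x + y‖ > 2 - ε ∧ ‖x - y‖ > 2 - ε) :=
  ⟨fun hrough _ hx _ hε => exists_norm_add_gt_and_norm_sub_gt_of_two_le_limsup hx (hrough _) hε,
    two_le_limsup_roughQuot_of_octahedral⟩

/-- the norm of `X` is 2-rough iff `X` is locally octahedral. -/
theorem stmt3 {X : Type*} [NormedAddCommGroup X] [NormedSpace ℝ X] [CompleteSpace X]
    [Nontrivial X] :
    (∀ x : X, 2 ≤ limsup (fun h : X => (‖x + h‖ + ‖x - h‖ - 2 * ‖x‖) / ‖h‖)
      (nhdsWithin (0 : X) {(0 : X)}ᶜ)) ↔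
    (∀ x : X, ‖x‖ = 1 → ∀ ε > (0:ℝ), ∃ y : X, ‖y‖ = 1 ∧
      ‖x + y‖ > 2 - ε ∧ ‖x - y‖ > 2 - ε) :=
  stmt3_general
end

section
/- Let X be a Banach space whose norm is 2-rough. Then every weak-star slice of the dual unit ball B_{X*} has diameter 2, where a weak-star slice is a set of the form S(B_{X*}, x, α) = {x* ∈ B_{X*} : x*(x) > ‖x‖ − α} for x ∈ X nonzero and α > 0. -/
/-!
Pick a small `h ≠ 0` with `‖x + h‖ + ‖x - h‖ - 2‖x‖ > (2 - ε)‖h‖` and norming functionals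
`f` of `x + h` and `g` of `x - h` in the dual unit ball. Both nearly norm `x`, so they lie in the
slice, while `(f - g) h ≥ ‖x + h‖ + ‖x - h‖ - 2‖x‖ > (2 - ε)‖h‖` forces `‖f - g‖ > 2 - ε`.
-/

open Filter Topology

section

variable {X : Type*} [NormedAddCommGroup X] [NormedSpace ℝ X]

lemma two_mul_norm_le_norm_add_add_norm_sub (x h : X) : 2 * ‖x‖ ≤ ‖x + h‖ + ‖x - h‖ := by
  calc 2 * ‖x‖ = ‖(x + h) + (x - h)‖ := by rw [add_add_sub_cancel, ← two_smul ℝ, norm_smul]; simp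
    _ ≤ ‖x + h‖ + ‖x - h‖ := norm_add_le _ _

lemma exists_small_ne_zero_of_lt_limsup_roughness [Nontrivial X] {x : X} {c : ℝ}
    (hc : c < limsup (fun h : X => (‖x + h‖ + ‖x - h‖ - 2 * ‖x‖) / ‖h‖) (𝓝[≠] 0))
    {δ : ℝ} (hδ : 0 < δ) :
    ∃ h : X, h ≠ 0 ∧ ‖h‖ < δ ∧ c * ‖h‖ < ‖x + h‖ + ‖x - h‖ - 2 * ‖x‖ := by
  have hcob : (𝓝[≠] (0 : X)).IsCoboundedUnder (· ≤ ·)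
      (fun h : X => (‖x + h‖ + ‖x - h‖ - 2 * ‖x‖) / ‖h‖) :=
    isCoboundedUnder_le_of_le _ (x := 0) fun h =>
      div_nonneg (sub_nonneg.2 (two_mul_norm_le_norm_add_add_norm_sub x h)) (norm_nonneg h)
  have hsmall : ∀ᶠ h in 𝓝[≠] (0 : X), ‖h‖ < δ :=
    eventually_nhdsWithin_of_eventually_nhds <|
      tendsto_norm_zero.eventually (eventually_lt_nhds hδ)
  obtain ⟨h, ⟨hquot, hhδ⟩, hh0⟩ :=
    (((frequently_lt_of_lt_limsup hcob hc).and_eventually hsmall).and_eventually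
      self_mem_nhdsWithin).exists
  have hpos : 0 < ‖h‖ := norm_pos_iff.2 hh0
  exact ⟨h, hh0, hhδ, (lt_div_iff₀ hpos).1 hquot⟩

lemma apply_le_norm_of_opNorm_le_one {f : X →L[ℝ] ℝ} (hf : ‖f‖ ≤ 1) (x : X) : f x ≤ ‖x‖ :=
  (le_abs_self _).trans (f.le_of_opNorm_le hf x |>.trans_eq (one_mul _))

lemma norm_sub_two_mul_norm_sub_le_apply {f : X →L[ℝ] ℝ} (hf : ‖f‖ ≤ 1) {y : X}
    (hfy : f y = ‖y‖) (x : X) : ‖x‖ - 2 * ‖x - y‖ ≤ f x := by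
  have hfyx := apply_le_norm_of_opNorm_le_one hf (y - x)
  have hxy : ‖x‖ - ‖x - y‖ ≤ ‖y‖ := by simpa using norm_sub_norm_le x (x - y)
  rw [map_sub, norm_sub_rev] at hfyx
  linarith

lemma norm_add_add_norm_sub_sub_le_sub_apply {f g : X →L[ℝ] ℝ} (hf : ‖f‖ ≤ 1) (hg : ‖g‖ ≤ 1)
    {x h : X} (hfx : f (x + h) = ‖x + h‖) (hgx : g (x - h) = ‖x - h‖) :
    ‖x + h‖ + ‖x - h‖ - 2 * ‖x‖ ≤ (f - g) h := by
  have hf_le := apply_le_norm_of_opNorm_le_one hf x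
  have hg_le := apply_le_norm_of_opNorm_le_one hg x
  rw [map_add] at hfx
  rw [map_sub] at hgx
  rw [sub_apply]
  linarith

lemma exists_mem_slice_two_sub_le_norm_sub [Nontrivial X] {x : X}
    (hrough : 2 ≤ limsup (fun h : X => (‖x + h‖ + ‖x - h‖ - 2 * ‖x‖) / ‖h‖) (𝓝[≠] 0))
    {α ε : ℝ} (hα : 0 < α) (hε : 0 < ε) :
    ∃ f g : X →L[ℝ] ℝ, (‖f‖ ≤ 1 ∧ ‖x‖ - α < f x) ∧ (‖g‖ ≤ 1 ∧ ‖x‖ - α < g x) ∧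
      2 - ε ≤ ‖f - g‖ := by
  obtain ⟨h, hh0, hhα, hrough_h⟩ :=
    exists_small_ne_zero_of_lt_limsup_roughness
      ((sub_lt_self 2 hε).trans_le hrough) (half_pos hα)
  obtain ⟨f, hf, hfx⟩ := exists_dual_vector'' ℝ (x + h)
  obtain ⟨g, hg, hgx⟩ := exists_dual_vector'' ℝ (x - h)
  have hf_slice := norm_sub_two_mul_norm_sub_le_apply hf hfx x
  have hg_slice := norm_sub_two_mul_norm_sub_le_apply hg hgx x
  simp only [sub_add_cancel_left, sub_sub_cancel, norm_neg] at hf_slice hg_slice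
  refine ⟨f, g, ⟨hf, by linarith⟩, ⟨hg, by linarith⟩, ?_⟩
  have hfg : (2 - ε) * ‖h‖ ≤ ‖f - g‖ * ‖h‖ :=
    calc (2 - ε) * ‖h‖ ≤ (f - g) h :=
          hrough_h.le.trans (norm_add_add_norm_sub_sub_le_sub_apply hf hg hfx hgx)
      _ ≤ ‖f - g‖ * ‖h‖ := (le_abs_self _).trans ((f - g).le_opNorm h)
  exact le_of_mul_le_mul_right hfg (norm_pos_iff.2 hh0)

end

theorem stmt4_general {X : Type*} [NormedAddCommGroup X] [NormedSpace ℝ X]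
    (hrough : ∀ x : X, 2 ≤ limsup (fun h : X => (‖x + h‖ + ‖x - h‖ - 2 * ‖x‖) / ‖h‖)
      (nhdsWithin (0 : X) {(0 : X)}ᶜ))
    (x : X) (hx : x ≠ 0) (α : ℝ) (hα : 0 < α) :
    Metric.diam {f : X →L[ℝ] ℝ | ‖f‖ ≤ 1 ∧ f x > ‖x‖ - α} = 2 := by
  have : Nontrivial X := nontrivial_of_ne x 0 hx
  have hball : {f : X →L[ℝ] ℝ | ‖f‖ ≤ 1 ∧ f x > ‖x‖ - α} ⊆ Metric.closedBall 0 1 :=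
    fun f hf => mem_closedBall_zero_iff.2 hf.1
  refine le_antisymm ?_ (le_of_forall_pos_le_add fun ε hε => ?_)
  · simpa using (Metric.diam_mono hball Metric.isBounded_closedBall).trans
      (Metric.diam_closedBall zero_le_one)
  · obtain ⟨f, g, hf, hg, hfg⟩ := exists_mem_slice_two_sub_le_norm_sub (hrough x) hα hε
    calc 2 ≤ dist f g + ε := by rw [dist_eq_norm]; linarith
      _ ≤ _ := by
        gcongr
        exact Metric.dist_le_diam_of_mem (Metric.isBounded_closedBall.subset hball) hf hg

/-- if the norm of `X` is 2-rough, then every weak-star slice of the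
dual unit ball has diameter 2. -/
theorem stmt4 {X : Type*} [NormedAddCommGroup X] [NormedSpace ℝ X] [CompleteSpace X]
    (hrough : ∀ x : X, 2 ≤ limsup (fun h : X => (‖x + h‖ + ‖x - h‖ - 2 * ‖x‖) / ‖h‖)
      (nhdsWithin (0 : X) {(0 : X)}ᶜ))
    (x : X) (hx : x ≠ 0) (α : ℝ) (hα : 0 < α) :
    Metric.diam {f : X →L[ℝ] ℝ | ‖f‖ ≤ 1 ∧ f x > ‖x‖ - α} = 2 :=
  stmt4_general hrough x hx α hα
end

section
/- Let X be a Banach space with the Daugavet property. Then the norm of X is octahedral: for every finite-dimensional subspace Y ⊆ X and every ε > 0 there exists x ∈ S_X such that ‖y + λx‖ > (1 − ε)(‖y‖ + |λ|) for all y ∈ Y and all λ ∈ ℝ. -/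
/-!
Every slice of the unit ball contains a subslice on which `‖x + y‖ > 2 - ε` for a given unit
vector `x`; iterating this over a finite `δ`-net of the unit sphere of `Y` produces one point `y`
of the unit ball with `‖w + y‖ ≈ 2` for all unit vectors `w ∈ Y`, and normalizing `y` gives `x`.
Finally, if `‖w‖, ‖x‖ ≤ 1`, evaluating a norming functional of `w + x` at `a • w + c • x` gives
`‖a • w + c • x‖ ≥ (‖w + x‖ - 1) * (a + c)` for `a, c ≥ 0`.
-/

open Metric

section Slices

variable {X : Type*} [NormedAddCommGroup X] [NormedSpace ℝ X]

def slice (f : X →L[ℝ] ℝ) (α : ℝ) : Set X := {y | ‖y‖ ≤ 1 ∧ ‖f‖ - α < f y}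

theorem slice_nonempty (f : X →L[ℝ] ℝ) {α : ℝ} (hα : 0 < α) : (slice f α).Nonempty := by
  obtain ⟨y, hy, hfy⟩ := f.exists_lt_apply_of_lt_opNorm (sub_lt_self ‖f‖ hα)
  rcases lt_abs.mp hfy with hpos | hneg
  · exact ⟨y, hy.le, hpos⟩
  · exact ⟨-y, by simpa using hy.le, by simpa using hneg⟩

theorem ContinuousLinearMap.apply_le_norm_of_opNorm_le_one {g : X →L[ℝ] ℝ} (hg : ‖g‖ ≤ 1)
    (y : X) : g y ≤ ‖y‖ :=
  (le_abs_self _).trans (by simpa using g.le_of_opNorm_le hg y)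

theorem ContinuousLinearMap.apply_le_opNorm_of_norm_le_one (g : X →L[ℝ] ℝ) {y : X}
    (hy : ‖y‖ ≤ 1) : g y ≤ ‖g‖ :=
  (le_abs_self _).trans (g.unit_le_opNorm y hy)

theorem norm_inv_norm_smul_sub_self {x : X} (hx : x ≠ 0) : ‖‖x‖⁻¹ • x - x‖ = |1 - ‖x‖| := by
  have hx' : ‖x‖ ≠ 0 := norm_ne_zero_iff.mpr hx
  calc ‖‖x‖⁻¹ • x - x‖ = ‖(‖x‖⁻¹ - 1) • x‖ := by rw [sub_smul, one_smul]
    _ = |‖x‖⁻¹ - 1| * |‖x‖| := by rw [norm_smul, Real.norm_eq_abs, abs_norm]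
    _ = |1 - ‖x‖| := by rw [← abs_mul, sub_one_mul, inv_mul_cancel₀ hx']

end Slices

def DaugavetProperty (X : Type*) [NormedAddCommGroup X] [NormedSpace ℝ X] : Prop :=
  ∀ ε > (0:ℝ), ∀ x : X, ‖x‖ = 1 → ∀ f : X →L[ℝ] ℝ, f ≠ 0 → ∀ α > (0:ℝ),
    ∃ y : X, ‖y‖ ≤ 1 ∧ f y > ‖f‖ - α ∧ ‖x + y‖ > 2 - ε

namespace DaugavetProperty

variable {X : Type*} [NormedAddCommGroup X] [NormedSpace ℝ X]

-- For `f = 0` the slice is the whole unit ball, and `y = x` works.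
theorem exists_mem_slice (hX : DaugavetProperty X) {ε : ℝ} (hε : 0 < ε) {x : X}
    (hx : ‖x‖ = 1) (f : X →L[ℝ] ℝ) {α : ℝ} (hα : 0 < α) :
    ∃ y ∈ slice f α, 2 - ε < ‖x + y‖ := by
  rcases eq_or_ne f 0 with rfl | hf
  · refine ⟨x, ⟨hx.le, by simpa using hα⟩, ?_⟩
    rw [← two_smul ℝ x, norm_smul, hx]
    norm_num [hε]
  · obtain ⟨y, hy, hfy, hxy⟩ := hX ε hε x hx f hf α hα
    exact ⟨y, ⟨hy, hfy⟩, hxy⟩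

-- The subslice is cut out by `ε • f + α • g₀`, where `g₀` norms `x + y₀` for a point `y₀` of
-- the smaller slice `slice f (α / 2)` with `‖x + y₀‖ > 2 - ε / 4`.
theorem exists_slice_subset (hX : DaugavetProperty X) {ε : ℝ} (hε : 0 < ε) {x : X}
    (hx : ‖x‖ = 1) (f : X →L[ℝ] ℝ) {α : ℝ} (hα : 0 < α) :
    ∃ g : X →L[ℝ] ℝ, ∃ β > 0, slice g β ⊆ {y ∈ slice f α | 2 - ε < ‖x + y‖} := by
  obtain ⟨y₀, ⟨hy₀, hfy₀⟩, hxy₀⟩ := hX.exists_mem_slice (by positivity : 0 < ε / 4) hx f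
    (half_pos hα)
  obtain ⟨g₀, hg₀, hg₀xy₀⟩ := exists_dual_vector'' ℝ (x + y₀)
  have hg₀x := (g₀.apply_le_norm_of_opNorm_le_one hg₀ x).trans hx.le
  have hg₀y₀ := (g₀.apply_le_norm_of_opNorm_le_one hg₀ y₀).trans hy₀
  have hg₀sum : 2 - ε / 4 < g₀ x + g₀ y₀ := by rw [← map_add, hg₀xy₀]; exact hxy₀
  refine ⟨ε • f + α • g₀, ε * α / 4, by positivity, fun y ⟨hy, hgy⟩ ↦ ?_⟩
  have hgy₀ := (ε • f + α • g₀).apply_le_opNorm_of_norm_le_one hy₀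
  have hfy := f.apply_le_opNorm_of_norm_le_one hy
  have hg₀y := (g₀.apply_le_norm_of_opNorm_le_one hg₀ y).trans hy
  have hg₀xy := g₀.apply_le_norm_of_opNorm_le_one hg₀ (x + y)
  simp only [add_apply, smul_apply, smul_eq_mul] at hgy hgy₀
  rw [map_add] at hg₀xy
  exact ⟨⟨hy, by nlinarith⟩, by nlinarith⟩

theorem exists_slice_subset_forall_mem_finset (hX : DaugavetProperty X) {δ : ℝ} (hδ : 0 < δ)
    (s : Finset X) (hs : ∀ u ∈ s, ‖u‖ = 1) :
    ∃ g : X →L[ℝ] ℝ, ∃ β > 0, ∀ y ∈ slice g β, ∀ u ∈ s, 2 - δ < ‖u + y‖ := by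
  classical
  induction s using Finset.induction_on with
  | empty => exact ⟨0, 1, one_pos, by simp⟩
  | insert u t _ ih =>
    obtain ⟨f, α, hα, hf⟩ := ih fun v hv ↦ hs v (Finset.mem_insert_of_mem hv)
    obtain ⟨g, β, hβ, hg⟩ := hX.exists_slice_subset hδ (hs u (Finset.mem_insert_self u t)) f hα
    refine ⟨g, β, hβ, fun y hy v hv ↦ ?_⟩
    rcases Finset.mem_insert.mp hv with rfl | hv
    · exact (hg hy).2
    · exact hf y (hg hy).1 v hv

theorem exists_forall_mem_compact (hX : DaugavetProperty X) {δ : ℝ} (hδ : 0 < δ) {K : Set X}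
    (hK : IsCompact K) (hK1 : K ⊆ sphere 0 1) :
    ∃ y : X, ‖y‖ ≤ 1 ∧ ∀ w ∈ K, 2 - δ < ‖w + y‖ := by
  obtain ⟨t, htK, ht, hcover⟩ := hK.finite_cover_balls (half_pos hδ)
  obtain ⟨g, β, hβ, hg⟩ := hX.exists_slice_subset_forall_mem_finset (half_pos hδ) ht.toFinset
    fun u hu ↦ by simpa using hK1 (htK (ht.mem_toFinset.mp hu))
  obtain ⟨y, hy⟩ := slice_nonempty g hβ
  refine ⟨y, hy.1, fun w hw ↦ ?_⟩
  obtain ⟨u, hut, hwu⟩ := Set.mem_iUnion₂.mp (hcover hw)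
  have huy := hg y hy u (ht.mem_toFinset.mpr hut)
  rw [mem_ball, dist_eq_norm] at hwu
  have : ‖u + y‖ ≤ ‖w + y‖ + ‖w - u‖ := by
    simpa [add_comm u] using norm_sub_le (w + y) (w - u)
  linarith

-- Adding a unit vector to `K` forces `‖y‖` close to `1`, so that `y` can be normalized.
theorem exists_norm_eq_one_forall_mem_compact [Nontrivial X] (hX : DaugavetProperty X) {δ : ℝ}
    (hδ : 0 < δ) {K : Set X} (hK : IsCompact K) (hK1 : K ⊆ sphere 0 1) :
    ∃ x : X, ‖x‖ = 1 ∧ ∀ w ∈ K, 2 - δ < ‖w + x‖ := by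
  set η := min δ 1
  have hη : 0 < η := lt_min hδ one_pos
  obtain ⟨x₀, hx₀⟩ := exists_norm_eq X zero_le_one
  obtain ⟨y, hy, hyK⟩ := hX.exists_forall_mem_compact (half_pos hη) (hK.insert x₀)
    (Set.insert_subset (by simpa using hx₀) hK1)
  have hx₀y : ‖x₀ + y‖ ≤ 1 + ‖y‖ := hx₀ ▸ norm_add_le x₀ y
  have hy₀ : 1 - η / 2 < ‖y‖ := by linarith [hyK x₀ (Set.mem_insert x₀ K)]
  have hy0 : y ≠ 0 := norm_pos_iff.mp (by linarith [min_le_right δ 1])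
  refine ⟨‖y‖⁻¹ • y, norm_smul_inv_norm hy0, fun w hw ↦ ?_⟩
  have hxy : ‖‖y‖⁻¹ • y - y‖ = 1 - ‖y‖ := by
    rw [norm_inv_norm_smul_sub_self hy0, abs_of_nonneg (by linarith)]
  have : ‖w + y‖ ≤ ‖w + ‖y‖⁻¹ • y‖ + ‖‖y‖⁻¹ • y - y‖ :=
    calc ‖w + y‖ = ‖(w + ‖y‖⁻¹ • y) - (‖y‖⁻¹ • y - y)‖ := by congr 1; abel
      _ ≤ _ := norm_sub_le _ _
  linarith [hyK w (Set.mem_insert_of_mem x₀ hw), min_le_left δ 1]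

end DaugavetProperty

section Octahedral

variable {X : Type*} [NormedAddCommGroup X] [NormedSpace ℝ X]

theorem norm_add_sub_one_mul_le_norm_smul_add_smul {w x : X} (hw : ‖w‖ ≤ 1) (hx : ‖x‖ ≤ 1)
    {a c : ℝ} (ha : 0 ≤ a) (hc : 0 ≤ c) : (‖w + x‖ - 1) * (a + c) ≤ ‖a • w + c • x‖ := by
  obtain ⟨g, hg, hgwx⟩ := exists_dual_vector'' ℝ (w + x)
  replace hgwx : g w + g x = ‖w + x‖ := by rw [← map_add]; exact hgwx
  have hgw : ‖w + x‖ - 1 ≤ g w := by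
    linarith [(g.apply_le_norm_of_opNorm_le_one hg x).trans hx]
  have hgx : ‖w + x‖ - 1 ≤ g x := by
    linarith [(g.apply_le_norm_of_opNorm_le_one hg w).trans hw]
  calc (‖w + x‖ - 1) * (a + c) = a * (‖w + x‖ - 1) + c * (‖w + x‖ - 1) := by ring
    _ ≤ a * g w + c * g x := by gcongr
    _ = g (a • w + c • x) := by simp
    _ ≤ ‖a • w + c • x‖ := g.apply_le_norm_of_opNorm_le_one hg _

theorem sub_mul_le_norm_add_smul_of_forall_norm_eq_one {Y : Submodule ℝ X} {x : X}
    (hx : ‖x‖ = 1) {η : ℝ} (hη : 0 ≤ η) (hY : ∀ w ∈ Y, ‖w‖ = 1 → 2 - η < ‖w + x‖) {y : X}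
    (hy : y ∈ Y) (l : ℝ) : (1 - η) * (‖y‖ + |l|) ≤ ‖y + l • x‖ := by
  rcases eq_or_ne y 0 with rfl | hy0
  · simp only [norm_zero, zero_add, norm_smul, hx, mul_one, Real.norm_eq_abs]
    nlinarith [abs_nonneg l]
  obtain ⟨s, hs, hsl⟩ : ∃ s : ℝ, |s| = 1 ∧ s * l = |l| := by
    rcases le_total 0 l with hl | hl
    · exact ⟨1, by simp, by simp [abs_of_nonneg hl]⟩
    · exact ⟨-1, by simp, by simp [abs_of_nonpos hl]⟩
  have hy' : ‖y‖ ≠ 0 := norm_ne_zero_iff.mpr hy0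
  set w := (s * ‖y‖⁻¹) • y
  have hw : ‖w‖ = 1 := by
    rw [norm_smul, Real.norm_eq_abs, abs_mul, hs, one_mul, abs_inv, abs_norm,
      inv_mul_cancel₀ hy']
  have hwy : ‖y‖ • w = s • y := by
    rw [smul_smul, mul_left_comm, mul_inv_cancel₀ hy', mul_one]
  calc (1 - η) * (‖y‖ + |l|) ≤ (‖w + x‖ - 1) * (‖y‖ + |l|) :=
        mul_le_mul_of_nonneg_right (by linarith [hY w (Y.smul_mem _ hy) hw]) (by positivity)
    _ ≤ ‖‖y‖ • w + |l| • x‖ :=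
        norm_add_sub_one_mul_le_norm_smul_add_smul hw.le hx.le (norm_nonneg y) (abs_nonneg l)
    _ = ‖s • (y + l • x)‖ := by rw [hwy, smul_add, smul_smul, hsl]
    _ = ‖y + l • x‖ := by rw [norm_smul, Real.norm_eq_abs, hs, one_mul]

end Octahedral

theorem stmt5_general {X : Type*} [NormedAddCommGroup X] [NormedSpace ℝ X]
    [Nontrivial X]
    (hDP : ∀ ε > (0:ℝ), ∀ x : X, ‖x‖ = 1 → ∀ f : X →L[ℝ] ℝ, f ≠ 0 → ∀ α > (0:ℝ),
      ∃ y : X, ‖y‖ ≤ 1 ∧ f y > ‖f‖ - α ∧ ‖x + y‖ > 2 - ε)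
    (Y : Subspace ℝ X) [FiniteDimensional ℝ Y] (ε : ℝ) (hε : 0 < ε) :
    ∃ x : X, ‖x‖ = 1 ∧ ∀ y ∈ Y, ∀ l : ℝ,
      ‖y + l • x‖ ≥ (1 - ε) * (‖y‖ + |l|) := by
  have hK : IsCompact ((↑) '' sphere (0 : Y) 1 : Set X) :=
    (isCompact_sphere 0 1).image continuous_subtype_val
  obtain ⟨x, hx, hxK⟩ := DaugavetProperty.exists_norm_eq_one_forall_mem_compact hDP hε hK
    (by rintro _ ⟨w, hw, rfl⟩; simpa using hw)
  have hxY : ∀ w ∈ Y, ‖w‖ = 1 → 2 - ε < ‖w + x‖ := fun w hw hw1 ↦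
    hxK w ⟨⟨w, hw⟩, by simpa using hw1, rfl⟩
  exact ⟨x, hx, fun y hy l ↦ sub_mul_le_norm_add_smul_of_forall_norm_eq_one hx hε.le hxY hy l⟩

/-- the Daugavet property implies that the norm is octahedral. -/
theorem stmt5 {X : Type*} [NormedAddCommGroup X] [NormedSpace ℝ X] [CompleteSpace X]
    [Nontrivial X]
    (hDP : ∀ ε > (0:ℝ), ∀ x : X, ‖x‖ = 1 → ∀ f : X →L[ℝ] ℝ, f ≠ 0 → ∀ α > (0:ℝ),
      ∃ y : X, ‖y‖ ≤ 1 ∧ f y > ‖f‖ - α ∧ ‖x + y‖ > 2 - ε)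
    (Y : Subspace ℝ X) [FiniteDimensional ℝ Y] (ε : ℝ) (hε : 0 < ε) :
    ∃ x : X, ‖x‖ = 1 ∧ ∀ y ∈ Y, ∀ l : ℝ,
      ‖y + l • x‖ ≥ (1 - ε) * (‖y‖ + |l|) :=
  stmt5_general hDP Y ε hε
end

section
/- Let K be a compact Hausdorff space without isolated points, let f₁,…,f_k ∈ S_{C(K)}, let h ∈ S_{C(K)} and let 0 < δ < 1. Then there exists a bounded sequence (gₙ) in S_{C(K)} such that gₙ → h pointwise on K and ‖fᵢ + gₙ‖ > 2 − 2δ for every i ∈ {1,…,k} and every n ∈ ℕ. -/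
open Filter Set

section auxlemmas
variable {K : Type*} [TopologicalSpace K] [CompactSpace K] [T2Space K]


lemma aux_infinite (hK : ∀ t : K, ¬ IsOpen ({t} : Set K))
    {U : Set K} (hU : IsOpen U) (hne : U.Nonempty) : U.Infinite := by
  intro hfin
  obtain ⟨x, hx⟩ := hne
  have h1 : IsClosed (U \ {x}) := (hfin.subset diff_subset).isClosed
  have h2 : ({x} : Set K) = U ∩ (U \ {x})ᶜ := by
    ext y
    simp only [mem_singleton_iff, mem_inter_iff, mem_compl_iff, mem_diff, not_and, not_not]
    constructor
    · rintro rfl; exact ⟨hx, fun _ => rfl⟩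
    · rintro ⟨hyU, hy⟩; exact hy hyU
  exact hK x (h2 ▸ hU.inter h1.isOpen_compl)

lemma aux_split (hK : ∀ t : K, ¬ IsOpen ({t} : Set K))
    {U : Set K} (hU : IsOpen U) (hne : U.Nonempty) :
    ∃ V W : Set K, IsOpen V ∧ V.Nonempty ∧ IsOpen W ∧ W.Nonempty ∧
      V ⊆ U ∧ W ⊆ U ∧ Disjoint V W := by
  obtain ⟨x, hx⟩ := hne
  obtain ⟨y, hy⟩ := ((aux_infinite hK hU ⟨x, hx⟩).diff (Set.finite_singleton x)).nonempty
  have hyx : y ≠ x := by simpa using hy.2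
  obtain ⟨A, B, hA, hB, hxA, hyB, hAB⟩ := t2_separation hyx.symm
  exact ⟨U ∩ A, U ∩ B, hU.inter hA, ⟨x, hx, hxA⟩, hU.inter hB, ⟨y, hy.1, hyB⟩,
    inter_subset_left, inter_subset_left,
    (hAB.mono inter_subset_right inter_subset_right)⟩

lemma aux_seq (hK : ∀ t : K, ¬ IsOpen ({t} : Set K))
    {U : Set K} (hU : IsOpen U) (hne : U.Nonempty) :
    ∃ O : ℕ → Set K, (∀ n, IsOpen (O n)) ∧ (∀ n, (O n).Nonempty) ∧ (∀ n, O n ⊆ U) ∧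
      Pairwise (Function.onFun Disjoint O) := by
  classical
  set P := {A : Set K // IsOpen A ∧ A.Nonempty ∧ A ⊆ U} with hP
  have key : ∀ p : P, ∃ q : Set K × Set K, IsOpen q.1 ∧ q.1.Nonempty ∧ IsOpen q.2 ∧
      q.2.Nonempty ∧ q.1 ⊆ p.1 ∧ q.2 ⊆ p.1 ∧ Disjoint q.1 q.2 := by
    rintro ⟨A, hAo, hAne, hAU⟩
    obtain ⟨V, W, h1, h2, h3, h4, h5, h6, h7⟩ := aux_split hK hAo hAne
    exact ⟨(V, W), h1, h2, h3, h4, h5, h6, h7⟩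
  choose q hq1 hq2 hq3 hq4 hq5 hq6 hq7 using key
  let S : ℕ → P := fun n => Nat.rec ⟨U, hU, hne, subset_rfl⟩
    (fun _ p => ⟨(q p).2, hq3 p, hq4 p, (hq6 p).trans p.2.2.2⟩) n
  have hSsucc : ∀ n, (S (n + 1)).1 = (q (S n)).2 := fun n => rfl
  have hanti : ∀ n m, n ≤ m → (S m).1 ⊆ (S n).1 := by
    intro n m hnm
    induction m with
    | zero => rw [Nat.le_zero.mp hnm]
    | succ m ih =>
      rcases Nat.lt_or_ge n (m + 1) with hlt | hge
      · exact (hSsucc m ▸ hq6 (S m)).trans (ih (Nat.lt_succ_iff.mp hlt))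
      · rw [Nat.le_antisymm hnm hge]
  refine ⟨fun n => (q (S n)).1, fun n => hq1 _, fun n => hq2 _, fun n => (hq5 _).trans (S n).2.2.2, ?_⟩
  have main : ∀ n m, n < m → Disjoint (q (S n)).1 (q (S m)).1 := by
    intro n m hnm
    have : (q (S m)).1 ⊆ (S (n + 1)).1 := (hq5 (S m)).trans (hanti (n + 1) m hnm)
    rw [hSsucc n] at this
    exact (hq7 (S n)).mono_right this
  intro n m hnm
  rcases hnm.lt_or_gt with hlt | hlt
  · exact main n m hlt
  · exact (main m n hlt).symm


lemma aux_sep {k : ℕ} (x : Fin k → K) (hx : Function.Injective x) :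
    ∃ V : Fin k → Set K, (∀ i, IsOpen (V i)) ∧ (∀ i, x i ∈ V i) ∧
      Pairwise (Function.onFun Disjoint V) := by
  classical
  have sep : ∀ i j : Fin k, i ≠ j →
      ∃ AB : Set K × Set K, IsOpen AB.1 ∧ IsOpen AB.2 ∧ x i ∈ AB.1 ∧ x j ∈ AB.2 ∧
        Disjoint AB.1 AB.2 := by
    intro i j hij
    obtain ⟨A, B, h1, h2, h3, h4, h5⟩ := t2_separation (fun e => hij (hx e))
    exact ⟨(A, B), h1, h2, h3, h4, h5⟩
  choose AB hA hB hxA hxB hd using sep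
  let A' : Fin k → Fin k → Set K := fun i j => if hij : i = j then univ else (AB i j hij).1
  let B' : Fin k → Fin k → Set K := fun i j => if hij : i = j then univ else (AB i j hij).2
  refine ⟨fun i => ⋂ j, (A' i j ∩ B' j i), ?_, ?_, ?_⟩
  · intro i
    exact isOpen_iInter_of_finite fun j => IsOpen.inter
      (by by_cases hij : i = j <;> simp [A', hij, hA]) (by by_cases hij : j = i <;> simp [B', hij, hB])
  · intro i
    refine mem_iInter.mpr fun j => ⟨?_, ?_⟩
    · by_cases hij : i = j <;> simp [A', hij, hxA]
    · by_cases hij : j = i <;> simp [B', hij]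
      exact hxB j i hij
  · intro i j hij
    have h1 : (⋂ l, (A' i l ∩ B' l i)) ⊆ (AB i j hij).1 := by
      refine (iInter_subset _ j).trans ?_
      simp [A', hij]
    have h2 : (⋂ l, (A' j l ∩ B' l j)) ⊆ (AB i j hij).2 := by
      refine (iInter_subset _ i).trans ?_
      simp [B', hij]
    exact (hd i j hij).mono h1 h2

lemma aux_points (hK : ∀ t : K, ¬ IsOpen ({t} : Set K))
    {k : ℕ} (U : Fin k → Set K) (hUo : ∀ i, IsOpen (U i)) (hUne : ∀ i, (U i).Nonempty) :
    ∃ x : Fin k → K, (∀ i, x i ∈ U i) ∧ Function.Injective x := by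
  induction k with
  | zero => exact ⟨fun i => i.elim0, fun i => i.elim0, fun i => i.elim0⟩
  | succ m ih =>
    obtain ⟨x', hx', hinj⟩ := ih (fun i => U i.succ) (fun i => hUo _) (fun i => hUne _)
    obtain ⟨x₀, hx₀U, hx₀r⟩ :=
      ((aux_infinite hK (hUo 0) (hUne 0)).diff (Set.finite_range x')).nonempty
    refine ⟨Fin.cases x₀ x', ?_, ?_⟩
    · intro i
      refine Fin.cases ?_ ?_ i
      · exact hx₀U
      · intro j; simpa using hx' j
    · intro a b hab
      induction a using Fin.cases with
      | zero =>
        induction b using Fin.cases with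
        | zero => rfl
        | succ j =>
          simp only [Fin.cases_zero, Fin.cases_succ] at hab
          exact absurd ⟨j, hab.symm⟩ hx₀r
      | succ a =>
        induction b using Fin.cases with
        | zero =>
          simp only [Fin.cases_zero, Fin.cases_succ] at hab
          exact absurd ⟨a, hab⟩ hx₀r
        | succ b =>
          simp only [Fin.cases_succ] at hab
          exact congrArg Fin.succ (hinj hab)
end auxlemmas


lemma combo_abs_le {a b c : ℝ} (ha : |a| ≤ 1) (hb : |b| ≤ 1) (hc0 : 0 ≤ c) (hc1 : c ≤ 1) :
    |a + c * (b - a)| ≤ 1 := by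
  have h : a + c * (b - a) = (1 - c) * a + c * b := by ring
  rw [h]
  calc |(1 - c) * a + c * b| ≤ |(1 - c) * a| + |c * b| := abs_add_le _ _
    _ = (1 - c) * |a| + c * |b| := by
        rw [abs_mul, abs_mul, abs_of_nonneg (by linarith), abs_of_nonneg hc0]
    _ ≤ 1 := by nlinarith [abs_nonneg a, abs_nonneg b]


/-- for `K` compact Hausdorff without isolated points, unit vectors
`f₁, …, f_k, h` in `C(K)` and `0 < δ < 1`, there is a sequence of unit vectors
converging pointwise to `h` and almost attaining the norm together with each `fᵢ`. -/
theorem stmt7 {K : Type*} [TopologicalSpace K] [CompactSpace K] [T2Space K]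
    (hK : ∀ t : K, ¬ IsOpen ({t} : Set K))
    (k : ℕ) (f : Fin k → C(K, ℝ)) (hf : ∀ i, ‖f i‖ = 1)
    (h : C(K, ℝ)) (hh : ‖h‖ = 1) (δ : ℝ) (hδ0 : 0 < δ) (hδ1 : δ < 1) :
    ∃ g : ℕ → C(K, ℝ), (∀ n, ‖g n‖ = 1) ∧
      (∀ t : K, Tendsto (fun n => g n t) atTop (nhds (h t))) ∧
      (∀ i n, ‖f i + g n‖ > 2 - 2 * δ) := by
  classical
  rcases Nat.eq_zero_or_pos k with hk | hk
  · subst hk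
    exact ⟨fun _ => h, fun _ => hh, fun t => tendsto_const_nhds, fun i => i.elim0⟩
  have hδ1' : (0 : ℝ) < 1 - δ := by linarith
  -- the sets where |f i| is nearly 1
  set U : Fin k → Set K := fun i => {s | 1 - δ < |f i s|} with hUdef
  have hUo : ∀ i, IsOpen (U i) := fun i =>
    isOpen_lt continuous_const ((f i).continuous.abs)
  have hUne : ∀ i, (U i).Nonempty := by
    intro i
    by_contra hcon
    rw [Set.not_nonempty_iff_eq_empty, Set.eq_empty_iff_forall_notMem] at hcon
    have hle : ‖f i‖ ≤ 1 - δ := by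
      rw [ContinuousMap.norm_le _ hδ1'.le]
      intro s
      have := hcon s
      simp only [hUdef, mem_setOf_eq, not_lt] at this
      simpa [Real.norm_eq_abs] using this
    rw [hf i] at hle; linarith
  -- choose distinct points and separating opens
  obtain ⟨x, hxU, hxinj⟩ := aux_points hK U hUo hUne
  obtain ⟨V, hVo, hxV, hVd⟩ := aux_sep x hxinj
  -- shrink: W i ⊆ U i, pairwise disjoint
  set W : Fin k → Set K := fun i => U i ∩ V i with hWdef
  have hWo : ∀ i, IsOpen (W i) := fun i => (hUo i).inter (hVo i)
  have hWne : ∀ i, (W i).Nonempty := fun i => ⟨x i, hxU i, hxV i⟩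
  have hWd : ∀ i j, i ≠ j → Disjoint (W i) (W j) := fun i j hij =>
    (hVd hij).mono inter_subset_right inter_subset_right
  -- disjoint sequence inside each W i
  have hseq : ∀ i : Fin k, ∃ O : ℕ → Set K, (∀ n, IsOpen (O n)) ∧ (∀ n, (O n).Nonempty) ∧
      (∀ n, O n ⊆ W i) ∧ Pairwise (Function.onFun Disjoint O) :=
    fun i => aux_seq hK (hWo i) (hWne i)
  choose O hOo hOne hOW hOd using hseq
  -- global disjointness
  have hglob : ∀ (i : Fin k) (n : ℕ) (j : Fin k) (m : ℕ), (i, n) ≠ (j, m) →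
      Disjoint (O i n) (O j m) := by
    intro i n j m hne
    by_cases hij : i = j
    · subst hij
      have hnm : n ≠ m := fun e => hne (by rw [e])
      exact hOd i hnm
    · exact (hWd i j hij).mono (hOW i n) (hOW j m)
  -- points
  have hp : ∀ (i : Fin k) (n : ℕ), ∃ p, p ∈ O i n := fun i n => hOne i n
  choose p hpO using hp
  -- Urysohn functions
  have hury : ∀ (i : Fin k) (n : ℕ), ∃ φ : C(K, ℝ), EqOn φ 0 (O i n)ᶜ ∧ EqOn φ 1 {p i n} ∧
      ∀ t, φ t ∈ Icc (0 : ℝ) 1 := by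
    intro i n
    exact exists_continuous_zero_one_of_isClosed (hOo i n).isClosed_compl isClosed_singleton
      (by simpa [Set.disjoint_singleton_right] using hpO i n)
  choose φ hφ0 hφ1 hφ01 using hury
  -- signs
  set σ : Fin k → ℕ → ℝ := fun i n => if 0 < f i (p i n) then 1 else -1 with hσdef
  have hσabs : ∀ i n, |σ i n| = 1 := by
    intro i n
    by_cases hc : 0 < f i (p i n) <;> simp [hσdef, hc]
  -- the sequence
  set g : ℕ → C(K, ℝ) := fun n => h + ∑ i, φ i n * (ContinuousMap.const K (σ i n) - h)
    with hgdef
  have hgeval : ∀ n t, g n t = h t + ∑ i, φ i n t * (σ i n - h t) := by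
    intro n t
    simp [hgdef]
  have hhabs : ∀ t, |h t| ≤ 1 := by
    intro t
    have := h.norm_coe_le_norm t
    rwa [hh, Real.norm_eq_abs] at this
  -- evaluation when t is in none of the sets
  have heval0 : ∀ n t, (∀ i, t ∉ O i n) → g n t = h t := by
    intro n t ht
    rw [hgeval]
    have : ∀ i ∈ Finset.univ, φ i n t * (σ i n - h t) = 0 := by
      intro i _
      rw [hφ0 i n (ht i), Pi.zero_apply, zero_mul]
    rw [Finset.sum_eq_zero this, add_zero]
  -- evaluation when t ∈ O j n
  have heval1 : ∀ n (j : Fin k) t, t ∈ O j n → g n t = h t + φ j n t * (σ j n - h t) := by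
    intro n j t ht
    rw [hgeval]
    congr 1
    refine Finset.sum_eq_single j ?_ (by simp)
    intro i _ hij
    have : t ∉ O i n := fun hmem =>
      Set.disjoint_left.mp (hglob i n j n (by simpa using hij)) hmem ht
    rw [hφ0 i n this, Pi.zero_apply, zero_mul]
  -- evaluation at peak points
  have hpeak : ∀ n (j : Fin k), g n (p j n) = σ j n := by
    intro n j
    rw [heval1 n j _ (hpO j n), hφ1 j n rfl]
    simp
  -- norm bound
  have hnorm1 : ∀ n, ‖g n‖ = 1 := by
    intro n
    refine le_antisymm ?_ ?_
    · rw [ContinuousMap.norm_le _ zero_le_one]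
      intro t
      rw [Real.norm_eq_abs]
      by_cases hex : ∃ j, t ∈ O j n
      · obtain ⟨j, hj⟩ := hex
        rw [heval1 n j t hj]
        exact combo_abs_le (hhabs t) (le_of_eq (hσabs j n)) (hφ01 j n t).1 (hφ01 j n t).2
      · push_neg at hex
        rw [heval0 n t hex]
        exact hhabs t
    · have := (g n).norm_coe_le_norm (p ⟨0, hk⟩ n)
      rw [hpeak n ⟨0, hk⟩, Real.norm_eq_abs, hσabs] at this
      exact this
  -- pointwise convergence
  have hconv : ∀ t : K, Tendsto (fun n => g n t) atTop (nhds (h t)) := by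
    intro t
    by_cases hex : ∃ j m, t ∈ O j m
    · obtain ⟨j, m, hjm⟩ := hex
      have hev : ∀ n, m < n → g n t = h t := by
        intro n hn
        refine heval0 n t fun i hmem => ?_
        exact Set.disjoint_left.mp
          (hglob i n j m (by simp [Prod.ext_iff]; intro _; exact hn.ne')) hmem hjm
      refine Tendsto.congr' ?_ (tendsto_const_nhds : Tendsto (fun _ : ℕ => h t) atTop (nhds (h t)))
      filter_upwards [eventually_gt_atTop m] with n hn
      exact (hev n hn).symm
    · push_neg at hex
      have hev : ∀ n, g n t = h t := fun n => heval0 n t fun i => hex i n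
      simpa [hev] using tendsto_const_nhds (α := ℝ) (f := atTop) (a := h t)
  -- norm attainment with f i
  have hbig : ∀ i n, ‖f i + g n‖ > 2 - 2 * δ := by
    intro i n
    have hpt : p i n ∈ U i := ((hOW i n).trans inter_subset_left) (hpO i n)
    have habs : 1 - δ < |f i (p i n)| := hpt
    have hub : |f i (p i n)| ≤ 1 := by
      have := (f i).norm_coe_le_norm (p i n)
      rwa [hf i, Real.norm_eq_abs] at this
    have hval : (f i + g n) (p i n) = f i (p i n) + σ i n := by
      simp [hpeak n i]
    have hlow : 2 - δ < |f i (p i n) + σ i n| := by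
      by_cases hc : 0 < f i (p i n)
      · have hσ : σ i n = 1 := by simp [hσdef, hc]
        rw [hσ, abs_of_pos (by linarith)]
        rw [abs_of_pos hc] at habs
        linarith
      · have hσ : σ i n = -1 := by simp [hσdef, hc]
        push_neg at hc
        rw [abs_of_nonpos hc] at habs
        rw [hσ, abs_of_nonpos (by linarith : f i (p i n) + -1 ≤ 0)]
        linarith
    have := (f i + g n).norm_coe_le_norm (p i n)
    rw [hval, Real.norm_eq_abs] at this
    linarith
  exact ⟨g, hnorm1, hconv, hbig⟩
end

section
/- Let X and Y be Banach spaces and suppose that for every finite-dimensional subspace E of X ⊗̂_π Y (the projective tensor product), every slice S of its unit ball, every bounded operator T ∈ L(X, Y*) and every ε > 0, there exist x ∈ S_X, y ∈ S_Y with x ⊗ y ∈ S and G ∈ L(X, Y*) such that G = T on E (viewing L(X,Y*) = (X ⊗̂_π Y)*), G(x)(y) = ‖T‖ and ‖G‖ ≤ (1 − ε)⁻¹‖T‖. Then X ⊗̂_π Y has the Daugavet property. -/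
/-! Take a norming functional `f` of `z` and apply the hypothesis to `T = ι⁻¹ f` on the line
`ℝ z`. The resulting `G` equals `1` both at `z` and at the elementary tensor `w = x ⊗ y` of the
slice, while `‖G‖ ≤ (1 - δ)⁻¹`; hence `2 = G (z + w) ≤ (1 - δ)⁻¹ ‖z + w‖`. -/

lemma two_le_mul_norm_add_of_apply_eq_one {E : Type*} [SeminormedAddCommGroup E]
    [NormedSpace ℝ E] (g : E →L[ℝ] ℝ) {c : ℝ} (hg : ‖g‖ ≤ c) {z w : E}
    (hz : g z = 1) (hw : g w = 1) : 2 ≤ c * ‖z + w‖ :=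
  calc (2 : ℝ) = g (z + w) := by rw [map_add, hz, hw]; norm_num
    _ ≤ ‖g‖ * ‖z + w‖ := (le_abs_self _).trans (g.le_opNorm _)
    _ ≤ c * ‖z + w‖ := by gcongr

theorem stmt14_general {X Y Z : Type*}
    [NormedAddCommGroup X] [NormedSpace ℝ X]
    [NormedAddCommGroup Y] [NormedSpace ℝ Y]
    [NormedAddCommGroup Z] [NormedSpace ℝ Z]
    (t : X →L[ℝ] Y →L[ℝ] Z)
    (ι : (X →L[ℝ] Y →L[ℝ] ℝ) ≃ₗᵢ[ℝ] (Z →L[ℝ] ℝ))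
    (hι : ∀ (G : X →L[ℝ] Y →L[ℝ] ℝ) (x : X) (y : Y), ι G (t x y) = G x y)
    (hyp : ∀ (E : Subspace ℝ Z), FiniteDimensional ℝ E →
      ∀ F : Z →L[ℝ] ℝ, F ≠ 0 → ∀ α > (0:ℝ),
      ∀ T : X →L[ℝ] Y →L[ℝ] ℝ, ∀ ε : ℝ, 0 < ε → ε < 1 →
      ∃ (x : X) (y : Y) (G : X →L[ℝ] Y →L[ℝ] ℝ),
        ‖x‖ = 1 ∧ ‖y‖ = 1 ∧ ‖t x y‖ ≤ 1 ∧ F (t x y) > ‖F‖ - α ∧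
        (∀ e ∈ E, ι G e = ι T e) ∧ G x y = ‖T‖ ∧ ‖G‖ ≤ (1 - ε)⁻¹ * ‖T‖) :
    ∀ ε > (0:ℝ), ∀ z : Z, ‖z‖ = 1 → ∀ F : Z →L[ℝ] ℝ, F ≠ 0 → ∀ α > (0:ℝ),
      ∃ w : Z, ‖w‖ ≤ 1 ∧ F w > ‖F‖ - α ∧ ‖z + w‖ > 2 - ε := by
  intro ε hε z hz F hF α hα
  obtain ⟨f, hf, hfz⟩ := exists_dual_vector ℝ z (norm_ne_zero_iff.mp (by rw [hz]; norm_num))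
  obtain ⟨δ, hδ, hδε⟩ := exists_between (lt_min one_pos (half_pos hε))
  obtain ⟨hδ1, hδ2⟩ := lt_min_iff.mp hδε
  obtain ⟨x, y, G, -, -, hw, hFw, hGE, hGxy, hG⟩ :=
    hyp (ℝ ∙ z) inferInstance F hF α hα (ι.symm f) δ hδ hδ1
  refine ⟨t x y, hw, hFw, ?_⟩
  have hT : ‖ι.symm f‖ = 1 := by rw [ι.symm.norm_map, hf]
  have hGz : ι G z = 1 := by
    rw [hGE z (Submodule.mem_span_singleton_self z), ι.apply_symm_apply, hfz, hz]; rfl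
  have hGw : ι G (t x y) = 1 := by rw [hι, hGxy, hT]
  have hGnorm : ‖ι G‖ ≤ (1 - δ)⁻¹ := by
    rw [ι.norm_map]; simpa only [hT, mul_one] using hG
  have key := two_le_mul_norm_add_of_apply_eq_one (ι G) hGnorm hGz hGw
  rw [inv_mul_eq_div, le_div_iff₀ (by linarith)] at key
  linarith

/-- abstract formulation of the projective tensor product `Z = X ⊗̂_π Y`:
`t` is the tensor map, the closed unit ball of `Z` is the closed convex hull of the
elementary tensors of unit vectors, and `ι` is the isometric identification of the
bilinear forms `L(X, Y*)` with `Z*`. If every operator `T ∈ L(X, Y*)` can be extended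
(in the sense of the statement) from finite-dimensional subspaces while attaining its
norm at an elementary tensor of any prescribed slice, then `Z` has the Daugavet
property. -/
theorem stmt14 {X Y Z : Type*}
    [NormedAddCommGroup X] [NormedSpace ℝ X] [CompleteSpace X]
    [NormedAddCommGroup Y] [NormedSpace ℝ Y] [CompleteSpace Y]
    [NormedAddCommGroup Z] [NormedSpace ℝ Z] [CompleteSpace Z]
    (t : X →L[ℝ] Y →L[ℝ] Z)
    (hball : Metric.closedBall (0 : Z) 1 =
      closure (convexHull ℝ {z : Z | ∃ x y, ‖x‖ = 1 ∧ ‖y‖ = 1 ∧ z = t x y}))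
    (ι : (X →L[ℝ] Y →L[ℝ] ℝ) ≃ₗᵢ[ℝ] (Z →L[ℝ] ℝ))
    (hι : ∀ (G : X →L[ℝ] Y →L[ℝ] ℝ) (x : X) (y : Y), ι G (t x y) = G x y)
    (hyp : ∀ (E : Subspace ℝ Z), FiniteDimensional ℝ E →
      ∀ F : Z →L[ℝ] ℝ, F ≠ 0 → ∀ α > (0:ℝ),
      ∀ T : X →L[ℝ] Y →L[ℝ] ℝ, ∀ ε : ℝ, 0 < ε → ε < 1 →
      ∃ (x : X) (y : Y) (G : X →L[ℝ] Y →L[ℝ] ℝ),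
        ‖x‖ = 1 ∧ ‖y‖ = 1 ∧ ‖t x y‖ ≤ 1 ∧ F (t x y) > ‖F‖ - α ∧
        (∀ e ∈ E, ι G e = ι T e) ∧ G x y = ‖T‖ ∧ ‖G‖ ≤ (1 - ε)⁻¹ * ‖T‖) :
    ∀ ε > (0:ℝ), ∀ z : Z, ‖z‖ = 1 → ∀ F : Z →L[ℝ] ℝ, F ≠ 0 → ∀ α > (0:ℝ),
      ∃ w : Z, ‖w‖ ≤ 1 ∧ F w > ‖F‖ - α ∧ ‖z + w‖ > 2 - ε :=
  stmt14_general t ι hι hyp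
end

section
/- Let X be a Banach space and suppose that for every z₁,…,zₙ ∈ S_X and every ε > 0 there exists x ∈ S_X such that ‖zᵢ + x‖ > 2 − ε for every i. Then the norm of X is octahedral: for every finite-dimensional subspace Y of X and every ε > 0 there exists x ∈ S_X with ‖y + λx‖ > (1 − ε)(‖y‖ + |λ|) for every y ∈ Y and λ ∈ ℝ. -/
/-- the finite-point characterization of octahedrality - if any finite set
of unit vectors admits an almost diametral unit vector, the norm is octahedral. -/
theorem stmt15 {X : Type*} [NormedAddCommGroup X] [NormedSpace ℝ X] [CompleteSpace X]
    (hyp : ∀ (n : ℕ) (z : Fin n → X), (∀ i, ‖z i‖ = 1) → ∀ ε > (0:ℝ),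
      ∃ x : X, ‖x‖ = 1 ∧ ∀ i, ‖z i + x‖ > 2 - ε) :
    ∀ (Y : Subspace ℝ X), FiniteDimensional ℝ Y → ∀ ε > (0:ℝ),
      ∃ x : X, ‖x‖ = 1 ∧ ∀ y ∈ Y, ∀ l : ℝ,
        ‖y + l • x‖ ≥ (1 - ε) * (‖y‖ + |l|) := by
  intro Y _ ε hε
  have hcomp : IsCompact (Metric.sphere (0:Y) 1) := isCompact_sphere 0 1
  obtain ⟨t, hts, htfin, hcov⟩ :=
    hcomp.finite_cover_balls (e := ε/2) (by linarith)
  haveI : Fintype t := htfin.fintype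
  set n := Fintype.card t with hn
  let e : t ≃ Fin n := Fintype.equivFin t
  let z : Fin n → X := fun i => ((e.symm i : Y) : X)
  have hz : ∀ i, ‖z i‖ = 1 := by
    intro i
    have h1 : ((e.symm i : Y)) ∈ Metric.sphere (0:Y) 1 := hts (e.symm i).2
    simp only [Metric.mem_sphere, dist_zero_right] at h1
    simpa [z] using h1
  obtain ⟨x, hx1, hx2⟩ := hyp n z hz (ε/2) (by linarith)
  have claim : ∀ u : Y, ‖u‖ = 1 → ‖(u : X) + x‖ ≥ 2 - ε := by
    intro u hu
    have hmem : u ∈ Metric.sphere (0:Y) 1 := by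
      simp [Metric.mem_sphere, dist_zero_right, hu]
    obtain ⟨v, hv, hvd⟩ := Set.mem_iUnion₂.mp (hcov hmem)
    have hd : ‖(u : X) - (v : X)‖ < ε/2 := by
      have h := Metric.mem_ball.mp hvd
      rw [dist_eq_norm] at h
      have : ‖(u:X) - (v:X)‖ = ‖u - v‖ := by
        rw [← Submodule.coe_sub]; simp
      rw [this]; exact h
    have hzi : ‖(v : X) + x‖ > 2 - ε/2 := by
      have h := hx2 (e ⟨v, hv⟩)
      simpa [z] using h
    have h3 : ‖(v:X) + x‖ ≤ ‖(u:X) + x‖ + ‖(u:X) - (v:X)‖ := by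
      have heq : (v:X) + x = ((u:X) + x) - ((u:X) - (v:X)) := by abel
      rw [heq]
      exact norm_sub_le _ _
    linarith
  refine ⟨x, hx1, ?_⟩
  intro y hy l
  rcases eq_or_ne y 0 with rfl | hy0
  · simp only [norm_zero, zero_add]
    rw [norm_smul, hx1, mul_one, Real.norm_eq_abs]
    nlinarith [abs_nonneg l]
  rcases eq_or_ne l 0 with rfl | hl0
  · simp only [zero_smul, add_zero, abs_zero]
    nlinarith [norm_nonneg y]
  set s := ‖y‖ with hs
  have hs0 : 0 < s := norm_pos_iff.mpr hy0
  set τ := |l| with hτ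
  have hτ0 : 0 < τ := abs_pos.mpr hl0
  set σ := l / τ with hσ
  have hσ1 : |σ| = 1 := by
    rw [hσ, abs_div, hτ, abs_abs, div_self hτ0.ne']
  have hσl : σ * l = τ := by
    rw [hσ, hτ]
    rcases abs_cases l with ⟨h1, h2⟩ | ⟨h1, h2⟩ <;> field_simp <;> nlinarith
  set uY : Y := (σ / s) • (⟨y, hy⟩ : Y) with huYdef
  have huYX : (uY : X) = (σ/s) • y := rfl
  have hyn : ‖(⟨y, hy⟩ : Y)‖ = s := rfl
  have huY : ‖uY‖ = 1 := by
    rw [huYdef, norm_smul, hyn, Real.norm_eq_abs, abs_div, hσ1, abs_of_pos hs0]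
    field_simp
  have key := claim uY huY
  have hunorm : ‖(uY : X)‖ = 1 := by
    rw [show ‖(uY : X)‖ = ‖uY‖ by simp, huY]
  have h2 : σ • y = s • (uY : X) := by
    rw [huYX, smul_smul]
    congr 1
    field_simp
  have h1 : ‖y + l • x‖ = ‖σ • y + τ • x‖ := by
    rw [← hσl]
    calc ‖y + l • x‖ = |σ| * ‖y + l • x‖ := by rw [hσ1, one_mul]
      _ = ‖σ • (y + l • x)‖ := by rw [norm_smul, Real.norm_eq_abs]
      _ = ‖σ • y + (σ * l) • x‖ := by rw [smul_add, smul_smul]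
  have e1 : σ • y + τ • x = (s+τ) • ((uY:X) + x) - (τ • (uY:X) + s • x) := by
    rw [h2]; module
  have hn1 : ‖(s+τ) • ((uY:X)+x)‖ = (s+τ) * ‖(uY:X)+x‖ := by
    rw [norm_smul, Real.norm_eq_abs, abs_of_pos (by linarith)]
  have hn2 : ‖τ • (uY:X) + s • x‖ ≤ τ + s := by
    calc ‖τ • (uY:X) + s • x‖ ≤ ‖τ • (uY:X)‖ + ‖s • x‖ := norm_add_le _ _
      _ = τ + s := by
          rw [norm_smul, norm_smul, hunorm, hx1, Real.norm_eq_abs, Real.norm_eq_abs,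
            abs_of_pos hτ0, abs_of_pos hs0, mul_one, mul_one]
  have h3 : ‖σ • y + τ • x‖ ≥ (s+τ)*(2-ε) - (τ + s) := by
    calc ‖σ • y + τ • x‖ = ‖(s+τ) • ((uY:X) + x) - (τ • (uY:X) + s • x)‖ := by rw [e1]
      _ ≥ ‖(s+τ) • ((uY:X)+x)‖ - ‖τ • (uY:X) + s • x‖ := norm_sub_norm_le _ _
      _ ≥ (s+τ)*(2-ε) - (τ + s) := by
          rw [hn1]
          have : (s+τ)*(2-ε) ≤ (s+τ) * ‖(uY:X)+x‖ := by
            apply mul_le_mul_of_nonneg_left key (by linarith)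
          linarith
  rw [h1]
  nlinarith [h3, hs0, hτ0]
end

section
/- Let X be a Banach space such that the norm of X* is 2-rough. Then X has the slice diameter two property: every slice S(B_X, x*, α) = {x ∈ B_X : x*(x) > ‖x*‖ − α} (x* ∈ X* nonzero, α > 0) of the unit ball of X has diameter 2. -/
open Filter

/-- A near-maximizer of a real continuous linear functional on the unit ball. -/
lemma exists_near_maximizer {X : Type*} [NormedAddCommGroup X] [NormedSpace ℝ X]
    (g : X →L[ℝ] ℝ) {δ : ℝ} (hδ : 0 < δ) : ∃ x : X, ‖x‖ ≤ 1 ∧ ‖g‖ - δ < g x := by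
  rcases lt_or_ge (‖g‖ - δ) 0 with h | h
  · exact ⟨0, by simp, by simpa using h⟩
  · have hlt : ‖g‖ - δ < ‖g‖ := by linarith
    obtain ⟨x, hx, hgx⟩ := g.exists_lt_apply_of_lt_opNorm hlt
    rcases le_or_gt 0 (g x) with h0 | h0
    · exact ⟨x, hx.le, by rwa [Real.norm_eq_abs, abs_of_nonneg h0] at hgx⟩
    · refine ⟨-x, by simpa using hx.le, ?_⟩
      rw [map_neg]
      rwa [Real.norm_eq_abs, abs_of_neg h0] at hgx

/-- if the norm of `X*` is 2-rough, then every slice of `B_X` has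
diameter 2 (the slice diameter two property). -/
theorem stmt16 {X : Type*} [NormedAddCommGroup X] [NormedSpace ℝ X] [CompleteSpace X]
    (hrough : ∀ f : X →L[ℝ] ℝ,
      2 ≤ limsup (fun h : X →L[ℝ] ℝ => (‖f + h‖ + ‖f - h‖ - 2 * ‖f‖) / ‖h‖)
        (nhdsWithin (0 : X →L[ℝ] ℝ) {(0 : X →L[ℝ] ℝ)}ᶜ))
    (f : X →L[ℝ] ℝ) (hf : f ≠ 0) (α : ℝ) (hα : 0 < α) :
    Metric.diam {x : X | ‖x‖ ≤ 1 ∧ f x > ‖f‖ - α} = 2 := by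
  set S : Set X := {x : X | ‖x‖ ≤ 1 ∧ f x > ‖f‖ - α} with hS
  have hSball : S ⊆ Metric.closedBall 0 1 := by
    intro x hx
    simpa [Metric.mem_closedBall] using hx.1
  have hSbdd : Bornology.IsBounded S :=
    (Metric.isBounded_closedBall (x := (0 : X)) (r := 1)).subset hSball
  haveI : Nontrivial (X →L[ℝ] ℝ) := nontrivial_of_ne f 0 hf
  haveI hNB : NeBot (nhdsWithin (0 : X →L[ℝ] ℝ) {(0 : X →L[ℝ] ℝ)}ᶜ) :=
    Module.punctured_nhds_neBot ℝ (X →L[ℝ] ℝ) 0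
  refine le_antisymm ?_ ?_
  · refine Metric.diam_le_of_forall_dist_le (by norm_num) ?_
    intro x hx y hy
    calc dist x y = ‖x - y‖ := dist_eq_norm x y
      _ ≤ ‖x‖ + ‖y‖ := norm_sub_le x y
      _ ≤ 2 := by have := hx.1; have := hy.1; linarith
  · -- 2 ≤ diam S
    refine le_of_forall_pos_le_add ?_
    intro ε hε
    rcases le_or_gt 2 ε with hε2 | hε2
    · have : (0 : ℝ) ≤ Metric.diam S := Metric.diam_nonneg
      linarith
    -- the quotient function
    set q : (X →L[ℝ] ℝ) → ℝ := fun h => (‖f + h‖ + ‖f - h‖ - 2 * ‖f‖) / ‖h‖ with hq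
    have hne : ∀ᶠ h in nhdsWithin (0 : X →L[ℝ] ℝ) {(0 : X →L[ℝ] ℝ)}ᶜ, h ≠ 0 := by
      filter_upwards [eventually_mem_nhdsWithin] with h hh
      simpa using hh
    have hub : ∀ᶠ h in nhdsWithin (0 : X →L[ℝ] ℝ) {(0 : X →L[ℝ] ℝ)}ᶜ, (-2 : ℝ) ≤ q h := by
      filter_upwards [hne] with h hh
      have hpos : (0 : ℝ) < ‖h‖ := norm_pos_iff.mpr hh
      rw [hq, le_div_iff₀ hpos]
      have h1 : ‖f‖ - ‖h‖ ≤ ‖f + h‖ := by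
        have := norm_add_le (f + h) (-h); simpa using this
      have h2 : ‖f‖ - ‖h‖ ≤ ‖f - h‖ := by
        have := norm_add_le (f - h) h; simpa using this
      linarith
    have hcob : IsCoboundedUnder (· ≤ ·)
        (nhdsWithin (0 : X →L[ℝ] ℝ) {(0 : X →L[ℝ] ℝ)}ᶜ) q :=
      isCoboundedUnder_le_of_eventually_le _ hub
    have hclt : (2 - ε / 4 : ℝ) < 2 := by linarith
    have hfreq : ∃ᶠ h in nhdsWithin (0 : X →L[ℝ] ℝ) {(0 : X →L[ℝ] ℝ)}ᶜ,
        2 - ε / 4 < q h :=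
      frequently_lt_of_lt_limsup hcob (lt_of_lt_of_le hclt (hrough f))
    have hsmall : ∀ᶠ h in nhdsWithin (0 : X →L[ℝ] ℝ) {(0 : X →L[ℝ] ℝ)}ᶜ, ‖h‖ < α / 4 := by
      have : ∀ᶠ h in nhds (0 : X →L[ℝ] ℝ), ‖h‖ < α / 4 := by
        have := Metric.ball_mem_nhds (0 : X →L[ℝ] ℝ) (by linarith : (0:ℝ) < α / 4)
        filter_upwards [this] with h hh
        simpa [Metric.mem_ball, dist_eq_norm] using hh
      exact nhdsWithin_le_nhds this
    obtain ⟨h, hqh, hhne, hhsmall⟩ := (hfreq.and_eventually (hne.and hsmall)).exists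
    have hpos : (0 : ℝ) < ‖h‖ := norm_pos_iff.mpr hhne
    set δ : ℝ := (ε / 8) * ‖h‖ with hδdef
    have hδpos : 0 < δ := by positivity
    have hδlt : δ < ‖h‖ := by
      have h1 : ε / 8 < 1 := by linarith
      exact mul_lt_of_lt_one_left hpos h1
    obtain ⟨x, hx1, hx2⟩ := exists_near_maximizer (f + h) hδpos
    obtain ⟨y, hy1, hy2⟩ := exists_near_maximizer (f - h) hδpos
    -- pointwise bounds
    have hbound : ∀ z : X, ‖z‖ ≤ 1 → |h z| ≤ ‖h‖ ∧ f z ≤ ‖f‖ := by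
      intro z hz
      constructor
      · have h1 := h.le_opNorm z
        have h2 : ‖h‖ * ‖z‖ ≤ ‖h‖ := mul_le_of_le_one_right (norm_nonneg h) hz
        rw [Real.norm_eq_abs] at h1
        linarith
      · have h1 := f.le_opNorm z
        have h2 : ‖f‖ * ‖z‖ ≤ ‖f‖ := mul_le_of_le_one_right (norm_nonneg f) hz
        rw [Real.norm_eq_abs] at h1
        linarith [le_abs_self (f z)]
    obtain ⟨hhx, hfx'⟩ := hbound x hx1
    obtain ⟨hhy, hfy'⟩ := hbound y hy1
    have habsx := abs_le.mp hhx
    have habsy := abs_le.mp hhy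
    have hl1 : ‖f‖ - ‖h‖ ≤ ‖f + h‖ := by
      have := norm_add_le (f + h) (-h); simpa using this
    have hl2 : ‖f‖ - ‖h‖ ≤ ‖f - h‖ := by
      have := norm_add_le (f - h) h; simpa using this
    have hex : (f + h) x = f x + h x := rfl
    have hey : (f - h) y = f y - h y := rfl
    rw [hex] at hx2
    rw [hey] at hy2
    have hfx : f x > ‖f‖ - α := by linarith
    have hfy : f y > ‖f‖ - α := by linarith
    -- the key lower bound on ‖x - y‖
    have hnum : 2 * ‖f‖ + (2 - ε / 4) * ‖h‖ < ‖f + h‖ + ‖f - h‖ := by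
      rw [hq, lt_div_iff₀ hpos] at hqh
      linarith
    have hkey : (2 - ε / 2) * ‖h‖ < h x - h y := by
      have e2 : (2 - ε / 2) * ‖h‖ = (2 - ε / 4) * ‖h‖ - 2 * δ := by
        rw [hδdef]; ring
      linarith
    have hxy : 2 - ε < ‖x - y‖ := by
      have hle : h x - h y ≤ ‖h‖ * ‖x - y‖ := by
        have h1 := h.le_opNorm (x - y)
        rw [Real.norm_eq_abs] at h1
        have h2 : h x - h y = h (x - y) := (map_sub h x y).symm
        have h3 := le_abs_self (h (x - y))
        linarith
      have h1 : ‖h‖ * (2 - ε / 2) < ‖h‖ * ‖x - y‖ := by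
        have := mul_comm (2 - ε / 2) ‖h‖
        linarith
      have h2 : 2 - ε / 2 < ‖x - y‖ := lt_of_mul_lt_mul_left h1 hpos.le
      linarith
    have hxS : x ∈ S := ⟨hx1, hfx⟩
    have hyS : y ∈ S := ⟨hy1, hfy⟩
    have hdist : dist x y ≤ Metric.diam S := Metric.dist_le_diam_of_mem hSbdd hxS hyS
    rw [dist_eq_norm] at hdist
    linarith
end
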